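/- arXiv:2409.01411 — 7 statements merged into one kernel-verified Lean document; each statement's English description precedes it below -/
import Mathlib

section
/- Let V be a finite type and f : Finset V → ℝ a 2nd-order submodular set function. Fix a ∈ V. Then the submodular mutual information I_f(a; ·) is submodular in its second argument: for all S ⊆ T ⊆ V and every j ∈ V with j ∉ T, it holds that I_f(a; S ∪ {j}) − I_f(a; S) ≥ I_f(a; T ∪ {j}) − I_f(a; T). -/
/-- Marginal gain `f(s | A) = f(A ∪ {s}) - f A`. -/
noncomputable def marg {V : Type*} [DecidableEq V] (f : Finset V → ℝ) (s : V) (A : Finset V) : ℝ :=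
  f (insert s A) - f A

/-- Submodular mutual information `I_f(a ; S) = f({a}) - f(a | S)`. -/
noncomputable def smi {V : Type*} [DecidableEq V] (f : Finset V → ℝ) (a : V) (S : Finset V) : ℝ :=
  f {a} - marg f a S

/-- `f` is 2nd-order submodular: `f(s|C) − f(s|A∪C) ≥ f(s|B∪C) − f(s|A∪B∪C)` for all
pairwise disjoint `A, B, C` and all `s`. -/
def SecondOrderSubmodular {V : Type*} [DecidableEq V] (f : Finset V → ℝ) : Prop :=
  ∀ A B C : Finset V, Disjoint A B → Disjoint A C → Disjoint B C → ∀ s : V,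
    marg f s (B ∪ C) - marg f s (A ∪ B ∪ C) ≤ marg f s C - marg f s (A ∪ C)

/-- for a 2nd-order submodular set function `f`, the submodular mutual
information `I_f(a; ·)` is submodular in its second argument. -/
theorem smi_submodular {V : Type*} [Fintype V] [DecidableEq V] (f : Finset V → ℝ)
    (h2nd : SecondOrderSubmodular f)
    (a : V) (S T : Finset V) (hST : S ⊆ T) (j : V) (hj : j ∉ T) :
    smi f a (insert j T) - smi f a T ≤ smi f a (insert j S) - smi f a S := by
  have h := h2nd {j} (T \ S) S
    (by simp [Finset.disjoint_left, Finset.mem_sdiff]; intro h; exact absurd h hj)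
    (by simp [Finset.disjoint_left]; intro h; exact hj (hST h))
    (Finset.sdiff_disjoint) a
  have e1 : (T \ S) ∪ S = T := Finset.sdiff_union_of_subset hST
  have e2 : ({j} : Finset V) ∪ (T \ S) ∪ S = insert j T := by
    rw [Finset.union_assoc, e1]; ext x; simp
  have e3 : ({j} : Finset V) ∪ S = insert j S := by ext x; simp
  rw [e1, e2, e3] at h
  simp only [smi]
  linarith
end

section
/- Let V be a finite type and f : Finset V → ℝ normalized, non-decreasing, and submodular, with f({v}) > 0 for every v ∈ V, and curvature κ := κ_f satisfying κ < 1. Let n ≥ 1 and let a, b : Fin n → V be injective maps such that a i = b j implies i = j (cross-disjoint action selections), and let N : Fin n → Finset (Fin n) be neighborhoods with i ∉ N i for every i. Write A for the image of a, B for the image of b, and S_i := {a j : j ∈ N i}. Then f(B) ≤ ((1 + κ − κ²)/(1 − κ))·f(A) + Σ_{i=1}^{n} ( f(b i | S_i) − f(a i | S_i) ) − Σ_{i=1}^{n} I_f(a i; S_i). -/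
/-- Curvature `κ_f = 1 - min_{v ∈ V} (f(V) - f(V \ {v})) / f({v})`. -/
noncomputable def curvature {V : Type*} [Fintype V] [Nonempty V] [DecidableEq V]
    (f : Finset V → ℝ) : ℝ :=
  1 - Finset.univ.inf' Finset.univ_nonempty
        (fun v => (f Finset.univ - f (Finset.univ \ {v})) / f {v})

lemma union_upper {V : Type*} [DecidableEq V] (f : Finset V → ℝ)
    (hsubmod : ∀ A B : Finset V, A ⊆ B → ∀ s : V, marg f s B ≤ marg f s A)
    (C T : Finset V) : f (C ∪ T) ≤ f C + ∑ v ∈ T, marg f v C := by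
  induction T using Finset.induction_on with
  | empty => simp
  | @insert x T hx ih =>
    rw [Finset.union_insert, Finset.sum_insert hx]
    have h2 : marg f x (C ∪ T) ≤ marg f x C := hsubmod C (C ∪ T) Finset.subset_union_left x
    have h3 : f (insert x (C ∪ T)) = f (C ∪ T) + marg f x (C ∪ T) := by simp [marg]
    linarith

lemma union_lower {V : Type*} [DecidableEq V] (f : Finset V → ℝ) (c : ℝ)
    (hbound : ∀ (v : V) (S : Finset V), v ∉ S → c * f {v} ≤ marg f v S)
    (C T : Finset V) (hdisj : ∀ v ∈ T, v ∉ C) :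
    f C + ∑ v ∈ T, c * f {v} ≤ f (C ∪ T) := by
  revert hdisj
  induction T using Finset.induction_on with
  | empty => intro _; simp
  | @insert x T hx ih =>
    intro hdisj
    have hxC : x ∉ C := hdisj x (Finset.mem_insert_self x T)
    have hxCT : x ∉ C ∪ T := by simp [hxC, hx]
    have ih' := ih (fun v hv => hdisj v (Finset.mem_insert_of_mem hv))
    have h1 : c * f {x} ≤ marg f x (C ∪ T) := hbound x (C ∪ T) hxCT
    have h2 : f (insert x (C ∪ T)) = f (C ∪ T) + marg f x (C ∪ T) := by simp [marg]
    rw [Finset.union_insert, Finset.sum_insert hx]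
    linarith

/-- deterministic per-round inequality behind Proposition 1. -/
theorem per_round_bound {V : Type*} [Fintype V] [Nonempty V] [DecidableEq V]
    (f : Finset V → ℝ)
    (hnorm : f ∅ = 0)
    (hmono : ∀ A B : Finset V, A ⊆ B → f A ≤ f B)
    (hsubmod : ∀ A B : Finset V, A ⊆ B → ∀ s : V, marg f s B ≤ marg f s A)
    (hpos : ∀ v : V, 0 < f {v})
    (hκ : curvature f < 1)
    (n : ℕ) (hn : 1 ≤ n)
    (a b : Fin n → V) (ha : Function.Injective a) (hb : Function.Injective b)
    (hab : ∀ i j : Fin n, a i = b j → i = j)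
    (N : Fin n → Finset (Fin n)) (hN : ∀ i : Fin n, i ∉ N i) :
    f (Finset.univ.image b) ≤
      ((1 + curvature f - curvature f ^ 2) / (1 - curvature f)) * f (Finset.univ.image a)
        + ∑ i : Fin n, (marg f (b i) ((N i).image a) - marg f (a i) ((N i).image a))
        - ∑ i : Fin n, smi f (a i) ((N i).image a) := by
  classical
  set κ := curvature f with hκdef
  have h1κ : (0:ℝ) < 1 - κ := by linarith
  -- insert v (univ \ {v}) = univ
  have hins : ∀ v : V, insert v (Finset.univ \ {v}) = Finset.univ := by
    intro v; ext x; by_cases hx : x = v <;> simp [hx]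
  -- curvature is nonnegative
  have hκ0 : (0:ℝ) ≤ κ := by
    obtain ⟨v⟩ := (inferInstance : Nonempty V)
    have h1 : Finset.univ.inf' Finset.univ_nonempty
        (fun v => (f Finset.univ - f (Finset.univ \ {v})) / f {v})
        ≤ (f Finset.univ - f (Finset.univ \ {v})) / f {v} :=
      Finset.inf'_le _ (Finset.mem_univ v)
    have h2 := hsubmod ∅ (Finset.univ \ {v}) (Finset.empty_subset _) v
    simp only [marg, hins v, hnorm] at h2
    have h2' : f Finset.univ - f (Finset.univ \ {v}) ≤ f {v} := by
      simpa using h2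
    have h3 : (f Finset.univ - f (Finset.univ \ {v})) / f {v} ≤ 1 := by
      rw [div_le_one (hpos v)]; exact h2'
    rw [hκdef]; unfold curvature; linarith
  -- key curvature bound on marginals
  have hbound : ∀ (v : V) (S : Finset V), v ∉ S → (1 - κ) * f {v} ≤ marg f v S := by
    intro v S hv
    have hSsub : S ⊆ Finset.univ \ {v} := by
      intro x hx
      simp only [Finset.mem_sdiff, Finset.mem_univ, true_and, Finset.mem_singleton]
      rintro rfl; exact hv hx
    have h1 : (1 - κ) ≤ (f Finset.univ - f (Finset.univ \ {v})) / f {v} := by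
      have := Finset.inf'_le
        (fun v => (f Finset.univ - f (Finset.univ \ {v})) / f {v}) (Finset.mem_univ v)
      rw [hκdef]; unfold curvature; linarith
    have h2 : (1 - κ) * f {v} ≤ f Finset.univ - f (Finset.univ \ {v}) := by
      have := mul_le_mul_of_nonneg_right h1 (le_of_lt (hpos v))
      rwa [div_mul_cancel₀ _ (ne_of_gt (hpos v))] at this
    have h3 : marg f v (Finset.univ \ {v}) ≤ marg f v S := hsubmod S _ hSsub v
    have h4 : marg f v (Finset.univ \ {v}) = f Finset.univ - f (Finset.univ \ {v}) := by
      rw [marg, hins v]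
    linarith
  set A := Finset.univ.image a with hA
  set B := Finset.univ.image b with hB
  set S : Fin n → Finset V := fun i => (N i).image a with hS
  set E := Finset.univ.filter (fun i : Fin n => a i = b i) with hE
  set Ec := Finset.univ.filter (fun i : Fin n => ¬ a i = b i) with hEc
  -- set identities
  have hADB : A \ B = Ec.image a := by
    ext v
    simp only [Finset.mem_sdiff, hA, hB, hEc, Finset.mem_image, Finset.mem_filter,
      Finset.mem_univ, true_and]
    constructor
    · rintro ⟨⟨i, rfl⟩, hv⟩
      exact ⟨i, fun h => hv ⟨i, h.symm⟩, rfl⟩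
    · rintro ⟨i, hne, rfl⟩
      refine ⟨⟨i, rfl⟩, ?_⟩
      rintro ⟨j, hj⟩
      cases hab i j hj.symm
      exact hne hj.symm
  have hBDA : B \ A = Ec.image b := by
    ext v
    simp only [Finset.mem_sdiff, hA, hB, hEc, Finset.mem_image, Finset.mem_filter,
      Finset.mem_univ, true_and]
    constructor
    · rintro ⟨⟨i, rfl⟩, hv⟩
      exact ⟨i, fun h => hv ⟨i, h⟩, rfl⟩
    · rintro ⟨i, hne, rfl⟩
      refine ⟨⟨i, rfl⟩, ?_⟩
      rintro ⟨j, hj⟩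
      have : j = i := hab j i hj
      exact hne (by rw [this] at hj; exact hj)
  have hinjE : ∀ (s : Finset (Fin n)), ∀ x ∈ s, ∀ y ∈ s, a x = a y → x = y :=
    fun s x _ y _ h => ha h
  have hinjEb : ∀ (s : Finset (Fin n)), ∀ x ∈ s, ∀ y ∈ s, b x = b y → x = y :=
    fun s x _ y _ h => hb h
  set x := ∑ i ∈ Ec, f {a i} with hx
  set y := ∑ i ∈ E, f {a i} with hy
  set MbE := ∑ i ∈ E, marg f (b i) (S i) with hMbE
  set MbEc := ∑ i ∈ Ec, marg f (b i) (S i) with hMbEc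
  -- (a): f B + (1-κ) x ≤ f (B ∪ A)
  have stepA : f B + (1 - κ) * x ≤ f (B ∪ A) := by
    have h := union_lower f (1 - κ) hbound B (A \ B)
      (fun v hv => (Finset.mem_sdiff.mp hv).2)
    rw [Finset.union_sdiff_self_eq_union] at h
    have hsum : ∑ v ∈ A \ B, (1 - κ) * f {v} = (1 - κ) * x := by
      rw [hADB, Finset.sum_image (hinjE Ec), hx, Finset.mul_sum]
    linarith [h, hsum.symm.le, hsum.le]
  -- (b): f (B ∪ A) ≤ f A + MbEc
  have stepB : f (B ∪ A) ≤ f A + MbEc := by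
    have h := union_upper f hsubmod A (B \ A)
    rw [Finset.union_sdiff_self_eq_union] at h
    have h2 : ∑ v ∈ B \ A, marg f v A = ∑ i ∈ Ec, marg f (b i) A := by
      rw [hBDA, Finset.sum_image (hinjEb Ec)]
    have h3 : ∑ i ∈ Ec, marg f (b i) A ≤ MbEc := by
      apply Finset.sum_le_sum
      intro i _
      exact hsubmod (S i) A (Finset.image_subset_image (Finset.subset_univ _)) (b i)
    rw [Finset.union_comm B A]
    calc f (A ∪ B) ≤ f A + ∑ v ∈ B \ A, marg f v A := h
      _ = f A + ∑ i ∈ Ec, marg f (b i) A := by rw [h2]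
      _ ≤ f A + MbEc := by linarith
  -- (c): (1-κ) y ≤ MbE
  have stepC : (1 - κ) * y ≤ MbE := by
    rw [hy, hMbE, Finset.mul_sum]
    apply Finset.sum_le_sum
    intro i hi
    have hieq : a i = b i := (Finset.mem_filter.mp hi).2
    have hbS : b i ∉ S i := by
      intro hmem
      obtain ⟨j, hjN, hj⟩ := Finset.mem_image.mp hmem
      have hji : j = i := hab j i hj
      rw [hji] at hjN
      exact hN i hjN
    rw [hieq]
    exact hbound (b i) (S i) hbS
  -- (d): (1-κ)(x+y) ≤ f A
  have stepD : (1 - κ) * (x + y) ≤ f A := by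
    have h := union_lower f (1 - κ) hbound ∅ A (fun v _ => Finset.notMem_empty v)
    rw [Finset.empty_union, hnorm] at h
    have hsum : ∑ v ∈ A, (1 - κ) * f {v} = (1 - κ) * (x + y) := by
      have hxy : (1 - κ) * (x + y) = ∑ i ∈ E, (1 - κ) * f {a i}
          + ∑ i ∈ Ec, (1 - κ) * f {a i} := by
        simp only [hx, hy, mul_add, Finset.mul_sum]; ring
      rw [hxy, hA, Finset.sum_image (hinjE Finset.univ), hE, hEc]
      exact (Finset.sum_filter_add_sum_filter_not Finset.univ (fun i => a i = b i)
        (fun i => (1 - κ) * f {a i})).symm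
    linarith [h, hsum.le]
  have hfA0 : (0:ℝ) ≤ f A := by rw [← hnorm]; exact hmono ∅ A (Finset.empty_subset A)
  set d := (1 + κ - κ ^ 2) / (1 - κ) with hdd
  have hd : d * (1 - κ) = 1 + κ - κ ^ 2 := div_mul_cancel₀ _ (ne_of_gt h1κ)
  -- sum splits
  have hsplitM : ∑ i : Fin n, marg f (b i) (S i) = MbE + MbEc := by
    rw [hMbE, hMbEc, hE, hEc,
      Finset.sum_filter_add_sum_filter_not Finset.univ (fun i => a i = b i)]
  have hsplitF : ∑ i : Fin n, f {a i} = y + x := by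
    rw [hy, hx, hE, hEc,
      Finset.sum_filter_add_sum_filter_not Finset.univ (fun i => a i = b i)]
  -- rewrite goal RHS
  have hgoal : ((1 + κ - κ ^ 2) / (1 - κ)) * f A
        + ∑ i : Fin n, (marg f (b i) (S i) - marg f (a i) (S i))
        - ∑ i : Fin n, smi f (a i) (S i)
      = d * f A + (MbE + MbEc) - (y + x) := by
    simp only [smi, Finset.sum_sub_distrib]
    rw [hsplitM, hsplitF, hdd]
    ring
  rw [hgoal]
  -- final arithmetic
  have e35 : κ * (x + y) ≤ (d - 1) * f A := by
    have h1 : κ * ((1 - κ) * (x + y)) ≤ κ * f A := mul_le_mul_of_nonneg_left stepD hκ0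
    have h2 : κ * f A ≤ (d - 1) * (1 - κ) * f A := by
      have : κ ≤ (d - 1) * (1 - κ) := by nlinarith [hd, mul_nonneg hκ0 (le_of_lt h1κ)]
      exact mul_le_mul_of_nonneg_right this hfA0
    nlinarith [h1, h2, mul_nonneg hκ0 hfA0]
  nlinarith [stepA, stepB, stepC, e35, hfA0]
end

section
/- Let V be a finite type and f : Finset V → ℝ normalized, non-decreasing, and submodular, with f({v}) > 0 for every v ∈ V, and curvature κ := κ_f satisfying κ < 1. Let n ≥ 1 agents have pairwise disjoint nonempty action sets 𝒱 : Fin n → Finset V. For each round t = 1, …, T let a_t : Fin n → V with a_t i ∈ 𝒱 i, and let N_t : Fin n → Finset (Fin n) with i ∉ N_t i; let b : Fin n → V with b i ∈ 𝒱 i. Write A_t for the image of a_t, B for the image of b, and S_{t,i} := {a_t j : j ∈ N_t i}. Then Σ_{t=1}^{T} f(A_t) ≥ ((1 − κ)/(1 + κ − κ²)) · [ T·f(B) + Σ_{t=1}^{T} Σ_{i=1}^{n} I_f(a_t i; S_{t,i}) − Σ_{i=1}^{n} ( max_{v ∈ 𝒱 i} Σ_{t=1}^{T} f(v | S_{t,i})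 − Σ_{t=1}^{T} f(a_t i | S_{t,i}) ) ]. -/
/-!
In each round, split the agents according to whether `a i = b i`. For those with `a i ≠ b i`,
the curvature bound `(1 - κ) f {v} ≤ f (v | A)` (for `v ∉ A`) gives
`f B + (1 - κ) ∑ f {a i} ≤ f (B ∪ {a i}) ≤ f (A ∪ {b i})`, and submodularity bounds the right
side by `f A + ∑ f (b i | S i)` because every `S i ⊆ A`; an agent with `a i = b i` contributes
`(1 - κ) f {a i} ≤ f (a i | S i)` directly. Summed over the rounds, mutual information and played
gains recombine into `∑ f {a i}`, the best fixed action in hindsight dominates `b i`, and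
`(1 - κ) ∑ f {a i} ≤ f A` finishes, since the constant `(1 - κ) / (1 + κ - κ²)` is at most `1 - κ`.
-/

open Finset

section Marginal

variable {V : Type*} [DecidableEq V] (f : Finset V → ℝ)

lemma apply_insert_eq_add_marg (s : V) (A : Finset V) : f (insert s A) = f A + marg f s A := by
  unfold marg; ring

lemma apply_union_image_le_add_sum_marg {ι : Type*} [DecidableEq ι]
    (hsubmod : ∀ A B : Finset V, A ⊆ B → ∀ s : V, marg f s B ≤ marg f s A)
    (g : ι → V) (S : ι → Finset V) {A : Finset V} (J : Finset ι) (hS : ∀ i ∈ J, S i ⊆ A) :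
    f (A ∪ J.image g) ≤ f A + ∑ i ∈ J, marg f (g i) (S i) := by
  induction J using Finset.induction_on with
  | empty => simp
  | @insert j J hj ih =>
    rw [image_insert, union_insert, sum_insert hj, apply_insert_eq_add_marg f]
    have hJ := ih fun i hi => hS i (mem_insert_of_mem hi)
    have hmarg := hsubmod _ (A ∪ J.image g)
      ((hS j (mem_insert_self j J)).trans subset_union_left) (g j)
    linarith

lemma apply_add_mul_sum_le_apply_union {c : ℝ}
    (hc : ∀ (v : V) (A : Finset V), v ∉ A → c * f {v} ≤ marg f v A)
    (C : Finset V) {D : Finset V} (hCD : Disjoint C D) :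
    f C + c * ∑ v ∈ D, f {v} ≤ f (C ∪ D) := by
  induction D using Finset.induction_on with
  | empty => simp
  | @insert v D hv ih =>
    rw [disjoint_insert_right] at hCD
    have hvCD : v ∉ C ∪ D := by simp [hCD.1, hv]
    rw [union_insert, sum_insert hv, apply_insert_eq_add_marg f]
    linarith [ih hCD.2, hc v _ hvCD]

lemma apply_univ_sub_apply_univ_sdiff [Fintype V] (v : V) :
    f univ - f (univ \ {v}) = marg f v (univ \ {v}) := by
  rw [marg, sdiff_singleton_eq_erase, insert_erase (mem_univ v)]

lemma apply_image_add_mul_sum_le {ι : Type*} [Fintype ι] [DecidableEq ι]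
    (hmono : ∀ A B : Finset V, A ⊆ B → f A ≤ f B)
    (hsubmod : ∀ A B : Finset V, A ⊆ B → ∀ s : V, marg f s B ≤ marg f s A)
    {c : ℝ} (hc : ∀ (v : V) (A : Finset V), v ∉ A → c * f {v} ≤ marg f v A)
    {a b : ι → V} (ha : a.Injective) (hab : ∀ i j, a i = b j → i = j)
    (S : ι → Finset V) (haS : ∀ i, a i ∉ S i) (hS : ∀ i, S i ⊆ univ.image a) :
    f (univ.image b) + c * ∑ i, f {a i} ≤ f (univ.image a) + ∑ i, marg f (b i) (S i) := by
  set D := univ.filter fun i => a i ≠ b i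
  have hsame : c * ∑ i ∈ univ.filter (fun i => a i = b i), f {a i}
      ≤ ∑ i ∈ univ.filter (fun i => a i = b i), marg f (b i) (S i) := by
    rw [mul_sum]
    refine sum_le_sum fun i hi => ?_
    rw [← (mem_filter.1 hi).2]
    exact hc _ _ (haS i)
  have hlower : f (univ.image b) + c * ∑ i ∈ D, f {a i} ≤ f (univ.image b ∪ D.image a) := by
    rw [← sum_image (f := fun v => f {v}) ha.injOn]
    refine apply_add_mul_sum_le_apply_union f hc _ (disjoint_left.2 ?_)
    simp only [mem_image, mem_univ, true_and, mem_filter, D]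
    rintro _ ⟨j, rfl⟩ ⟨i, hi, hij⟩
    exact hi (hab i j hij ▸ hij)
  have hswap : f (univ.image b ∪ D.image a) ≤ f (univ.image a ∪ D.image b) := by
    refine hmono _ _ fun x => ?_
    simp only [mem_union, mem_image, mem_univ, true_and, mem_filter, D]
    rintro (⟨i, rfl⟩ | ⟨i, -, rfl⟩)
    · by_cases h : a i = b i
      exacts [Or.inl ⟨i, h⟩, Or.inr ⟨i, h, rfl⟩]
    · exact Or.inl ⟨i, rfl⟩
  have hupper := apply_union_image_le_add_sum_marg f hsubmod b S D fun i _ => hS i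
  rw [← sum_filter_add_sum_filter_not univ (fun i => a i = b i),
    ← sum_filter_add_sum_filter_not univ (fun i => a i = b i) (fun i => marg f (b i) (S i))]
  linarith

lemma card_mul_add_sum_smi_sub_regret_le {ι τ : Type*} [Fintype ι] [Fintype τ] {κ : ℝ}
    (B : Finset V) (x : τ → ι → V) (y : ι → V) (S : τ → ι → Finset V) (F : τ → ℝ) (R : ι → ℝ)
    (hround : ∀ t, f B + (1 - κ) * ∑ i, f {x t i} ≤ F t + ∑ i, marg f (y i) (S t i))
    (hregret : ∀ i, ∑ t, marg f (y i) (S t i) ≤ R i) :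
    (Fintype.card τ : ℝ) * f B + ∑ t, ∑ i, smi f (x t i) (S t i)
        - ∑ i, (R i - ∑ t, marg f (x t i) (S t i))
      ≤ ∑ t, (F t + κ * ∑ i, f {x t i}) := by
  have hrounds := sum_le_sum fun t (_ : t ∈ univ) => hround t
  have hregrets := sum_le_sum fun i (_ : i ∈ univ) => hregret i
  simp only [smi, sum_sub_distrib, sum_add_distrib, sum_const, card_univ, nsmul_eq_mul,
    ← mul_sum] at hrounds ⊢
  rw [sum_comm (f := fun i t => marg f (y i) (S t i))] at hregrets
  rw [sum_comm (f := fun i t => marg f (x t i) (S t i))]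
  linarith

end Marginal

section Curvature

variable {V : Type*} [Fintype V] [Nonempty V] [DecidableEq V] (f : Finset V → ℝ)

lemma one_sub_curvature_mul_le_marg_univ_sdiff (hpos : ∀ v : V, 0 < f {v}) (v : V) :
    (1 - curvature f) * f {v} ≤ marg f v (univ \ {v}) := by
  rw [← apply_univ_sub_apply_univ_sdiff, ← le_div_iff₀ (hpos v), curvature, sub_sub_cancel]
  exact inf'_le _ (mem_univ v)

lemma one_sub_curvature_mul_le_marg
    (hsubmod : ∀ A B : Finset V, A ⊆ B → ∀ s : V, marg f s B ≤ marg f s A)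
    (hpos : ∀ v : V, 0 < f {v}) (v : V) (A : Finset V) (hv : v ∉ A) :
    (1 - curvature f) * f {v} ≤ marg f v A :=
  (one_sub_curvature_mul_le_marg_univ_sdiff f hpos v).trans <|
    hsubmod _ _ (fun x hx => by simpa using ne_of_mem_of_not_mem hx hv) v

lemma curvature_nonneg (hnorm : f ∅ = 0)
    (hsubmod : ∀ A B : Finset V, A ⊆ B → ∀ s : V, marg f s B ≤ marg f s A)
    (hpos : ∀ v : V, 0 < f {v}) : 0 ≤ curvature f := by
  obtain ⟨v⟩ := ‹Nonempty V›
  have h := one_sub_curvature_mul_le_marg f hsubmod hpos v ∅ (notMem_empty v)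
  rw [marg, insert_empty, hnorm, sub_zero] at h
  nlinarith [hpos v]

end Curvature

lemma div_mul_add_mul_le {κ F P : ℝ} (hκ0 : 0 ≤ κ) (hκ1 : κ < 1) (hP : 0 ≤ P)
    (hPF : (1 - κ) * P ≤ F) : (1 - κ) / (1 + κ - κ ^ 2) * (F + κ * P) ≤ F := by
  have hratio : (1 - κ) / (1 + κ - κ ^ 2) ≤ 1 - κ :=
    div_le_self (by linarith) (by nlinarith)
  have hFP : 0 ≤ F + κ * P := by nlinarith
  calc (1 - κ) / (1 + κ - κ ^ 2) * (F + κ * P) ≤ (1 - κ) * (F + κ * P) := by gcongr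
    _ ≤ F := by nlinarith

theorem action_coordination_bound_general {V : Type*} [Fintype V] [Nonempty V] [DecidableEq V]
    (f : Finset V → ℝ)
    (hnorm : f ∅ = 0)
    (hmono : ∀ A B : Finset V, A ⊆ B → f A ≤ f B)
    (hsubmod : ∀ A B : Finset V, A ⊆ B → ∀ s : V, marg f s B ≤ marg f s A)
    (hpos : ∀ v : V, 0 < f {v})
    (hκ : curvature f < 1)
    (n : ℕ)
    (𝒱 : Fin n → Finset V)
    (h𝒱ne : ∀ i : Fin n, (𝒱 i).Nonempty)
    (h𝒱disj : ∀ i j : Fin n, i ≠ j → Disjoint (𝒱 i) (𝒱 j))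
    (T : ℕ)
    (a : Fin T → Fin n → V) (ha : ∀ (t : Fin T) (i : Fin n), a t i ∈ 𝒱 i)
    (N : Fin T → Fin n → Finset (Fin n)) (hN : ∀ (t : Fin T) (i : Fin n), i ∉ N t i)
    (b : Fin n → V) (hb : ∀ i : Fin n, b i ∈ 𝒱 i) :
    ∑ t : Fin T, f (Finset.univ.image (a t)) ≥
      ((1 - curvature f) / (1 + curvature f - curvature f ^ 2)) *
        ((T : ℝ) * f (Finset.univ.image b)
          + ∑ t : Fin T, ∑ i : Fin n, smi f (a t i) ((N t i).image (a t))
          - ∑ i : Fin n,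
              ((𝒱 i).sup' (h𝒱ne i) (fun v => ∑ t : Fin T, marg f v ((N t i).image (a t)))
                - ∑ t : Fin T, marg f (a t i) ((N t i).image (a t)))) := by
  set κ := curvature f
  have hκ0 : 0 ≤ κ := curvature_nonneg f hnorm hsubmod hpos
  have hc := one_sub_curvature_mul_le_marg f hsubmod hpos
  have hagent : ∀ {x : V} {i j : Fin n}, x ∈ 𝒱 i → x ∈ 𝒱 j → i = j := fun hi hj =>
    by_contra fun hne => disjoint_left.1 (h𝒱disj _ _ hne) hi hj
  have hinj : ∀ t, (a t).Injective := fun t i j h => hagent (ha t i) (h ▸ ha t j)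
  have hround : ∀ t, f (univ.image b) + (1 - κ) * ∑ i, f {a t i}
      ≤ f (univ.image (a t)) + ∑ i, marg f (b i) ((N t i).image (a t)) := fun t =>
    apply_image_add_mul_sum_le f hmono hsubmod hc (hinj t)
      (fun i j h => hagent (ha t i) (h ▸ hb j)) _
      (fun i h => by obtain ⟨j, hj, hji⟩ := mem_image.1 h; exact hN t i (hinj t hji ▸ hj))
      (fun i => image_subset_image (subset_univ _))
  have hplayed : ∀ t, (1 - κ) * ∑ i, f {a t i} ≤ f (univ.image (a t)) := fun t => by
    simpa [hnorm, sum_image (hinj t).injOn] using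
      apply_add_mul_sum_le_apply_union f hc ∅ (disjoint_empty_left (univ.image (a t)))
  have hbracket := card_mul_add_sum_smi_sub_regret_le f (univ.image b) a b
    (fun t i => (N t i).image (a t)) (fun t => f (univ.image (a t))) _ hround
    fun i => le_sup' (fun v => ∑ t, marg f v ((N t i).image (a t))) (hb i)
  rw [Fintype.card_fin] at hbracket
  have hratio : 0 ≤ (1 - κ) / (1 + κ - κ ^ 2) := div_nonneg (by linarith) (by nlinarith)
  calc (1 - κ) / (1 + κ - κ ^ 2) * _
      ≤ (1 - κ) / (1 + κ - κ ^ 2) * ∑ t, (f (univ.image (a t)) + κ * ∑ i, f {a t i}) :=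
        mul_le_mul_of_nonneg_left hbracket hratio
    _ = ∑ t, (1 - κ) / (1 + κ - κ ^ 2) * (f (univ.image (a t)) + κ * ∑ i, f {a t i}) :=
        mul_sum _ _ _
    _ ≤ ∑ t, f (univ.image (a t)) := sum_le_sum fun t _ =>
        div_mul_add_mul_le hκ0 hκ (sum_nonneg fun i _ => (hpos _).le) (hplayed t)

/-- Proposition 1 of the paper in deterministic form. -/
theorem action_coordination_bound {V : Type*} [Fintype V] [Nonempty V] [DecidableEq V]
    (f : Finset V → ℝ)
    (hnorm : f ∅ = 0)
    (hmono : ∀ A B : Finset V, A ⊆ B → f A ≤ f B)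
    (hsubmod : ∀ A B : Finset V, A ⊆ B → ∀ s : V, marg f s B ≤ marg f s A)
    (hpos : ∀ v : V, 0 < f {v})
    (hκ : curvature f < 1)
    (n : ℕ) (hn : 1 ≤ n)
    (𝒱 : Fin n → Finset V)
    (h𝒱ne : ∀ i : Fin n, (𝒱 i).Nonempty)
    (h𝒱disj : ∀ i j : Fin n, i ≠ j → Disjoint (𝒱 i) (𝒱 j))
    (T : ℕ)
    (a : Fin T → Fin n → V) (ha : ∀ (t : Fin T) (i : Fin n), a t i ∈ 𝒱 i)
    (N : Fin T → Fin n → Finset (Fin n)) (hN : ∀ (t : Fin T) (i : Fin n), i ∉ N t i)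
    (b : Fin n → V) (hb : ∀ i : Fin n, b i ∈ 𝒱 i) :
    ∑ t : Fin T, f (Finset.univ.image (a t)) ≥
      ((1 - curvature f) / (1 + curvature f - curvature f ^ 2)) *
        ((T : ℝ) * f (Finset.univ.image b)
          + ∑ t : Fin T, ∑ i : Fin n, smi f (a t i) ((N t i).image (a t))
          - ∑ i : Fin n,
              ((𝒱 i).sup' (h𝒱ne i) (fun v => ∑ t : Fin T, marg f v ((N t i).image (a t)))
                - ∑ t : Fin T, marg f (a t i) ((N t i).image (a t)))) :=
  action_coordination_bound_general f hnorm hmono hsubmod hpos hκ n 𝒱 h𝒱ne h𝒱disj T a ha N hN b hb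
end

section
/- Let V be a finite type and f : Finset V → ℝ normalized, non-decreasing, and submodular, with f({v}) > 0 for every v ∈ V, and curvature κ := κ_f. Let n ≥ 1 and let a, b : Fin n → V be injective maps such that a i = b j implies i = j. Write A for the image of a and B for the image of b. If every agent's action is a best response given all other agents' actions, i.e. f(a i | A∖{a i}) ≥ f(b i | A∖{a i}) for every i, then (1 + κ)·f(A) ≥ f(B). In particular, when b is an optimal joint action, the fully centralized equilibrium A achieves at least a 1/(1+κ_f) fraction of the optimal value. -/
lemma aux_L1 {V : Type*} [DecidableEq V] (f : Finset V → ℝ)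
    (hsubmod : ∀ A B : Finset V, A ⊆ B → ∀ s : V, marg f s B ≤ marg f s A)
    (S C : Finset V) : f (C ∪ S) ≤ f C + ∑ v ∈ S, marg f v C := by
  classical
  induction S using Finset.induction_on with
  | empty => simp
  | @insert v S hv ih =>
    have h1 : C ∪ insert v S = insert v (C ∪ S) := by
      ext x; simp [or_comm, or_left_comm, or_assoc]
    have h2 : marg f v (C ∪ S) ≤ marg f v C :=
      hsubmod C (C ∪ S) Finset.subset_union_left v
    have : f (insert v (C ∪ S)) = marg f v (C ∪ S) + f (C ∪ S) := by
      simp [marg]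
    rw [h1, Finset.sum_insert hv]
    rw [this]
    linarith

lemma aux_L2 {V : Type*} [Fintype V] [DecidableEq V] (f : Finset V → ℝ)
    (hsubmod : ∀ A B : Finset V, A ⊆ B → ∀ s : V, marg f s B ≤ marg f s A)
    (C : Finset V) : ∀ S : Finset V, (∀ v ∈ S, v ∉ C) →
    f C + ∑ v ∈ S, marg f v (Finset.univ \ {v}) ≤ f (C ∪ S) := by
  classical
  intro S
  induction S using Finset.induction_on with
  | empty => simp
  | @insert v S hv ih =>
    intro hd
    have hd' : ∀ w ∈ S, w ∉ C := fun w hw => hd w (Finset.mem_insert_of_mem hw)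
    have h1 : C ∪ insert v S = insert v (C ∪ S) := by
      ext x; simp [or_comm, or_left_comm, or_assoc]
    have hsub : C ∪ S ⊆ Finset.univ \ {v} := by
      intro w hw
      simp only [Finset.mem_sdiff, Finset.mem_univ, Finset.mem_singleton, true_and]
      intro heq
      rcases Finset.mem_union.1 hw with h | h
      · exact hd v (Finset.mem_insert_self v S) (heq ▸ h)
      · exact hv (heq ▸ h)
    have h2 : marg f v (Finset.univ \ {v}) ≤ marg f v (C ∪ S) :=
      hsubmod (C ∪ S) (Finset.univ \ {v}) hsub v
    have h3 : f (insert v (C ∪ S)) = marg f v (C ∪ S) + f (C ∪ S) := by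
      simp [marg]
    rw [h1, Finset.sum_insert hv, h3]
    linarith [ih hd']

lemma aux_L3 {V : Type*} [DecidableEq V] (f : Finset V → ℝ)
    (hsubmod : ∀ A B : Finset V, A ⊆ B → ∀ s : V, marg f s B ≤ marg f s A)
    (A : Finset V) :
    ∀ S : Finset V, S ⊆ A → ∑ v ∈ S, marg f v (A \ {v}) ≤ f A - f (A \ S) := by
  classical
  intro S
  induction S using Finset.induction_on with
  | empty => simp
  | @insert v S hv ih =>
    intro hsub
    have hvA : v ∈ A := hsub (Finset.mem_insert_self v S)
    have hSA : S ⊆ A := fun w hw => hsub (Finset.mem_insert_of_mem hw)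
    have e1 : A \ insert v S = (A \ S) \ {v} := by
      ext x; simp only [Finset.mem_sdiff, Finset.mem_insert, Finset.mem_singleton]; tauto
    have hvAS : v ∈ A \ S := Finset.mem_sdiff.2 ⟨hvA, hv⟩
    have e2 : insert v ((A \ S) \ {v}) = A \ S := by
      rw [Finset.sdiff_singleton_eq_erase, Finset.insert_erase hvAS]
    have h3 : f (A \ S) - f (A \ insert v S) = marg f v ((A \ S) \ {v}) := by
      rw [e1, marg, e2]
    have hsub2 : (A \ S) \ {v} ⊆ A \ {v} :=
      Finset.sdiff_subset_sdiff Finset.sdiff_subset (le_refl _)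
    have h4 : marg f v (A \ {v}) ≤ marg f v ((A \ S) \ {v}) :=
      hsubmod ((A \ S) \ {v}) (A \ {v}) hsub2 v
    rw [Finset.sum_insert hv]
    linarith [ih hSA]

/-- fully centralized case of Theorem 1 (deterministic content):
if every agent best-responds against all other agents' actions, then
`(1 + κ_f) · f(A) ≥ f(B)`. -/
theorem centralized_bound {V : Type*} [Fintype V] [Nonempty V] [DecidableEq V]
    (f : Finset V → ℝ)
    (hnorm : f ∅ = 0)
    (hmono : ∀ A B : Finset V, A ⊆ B → f A ≤ f B)
    (hsubmod : ∀ A B : Finset V, A ⊆ B → ∀ s : V, marg f s B ≤ marg f s A)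
    (hpos : ∀ v : V, 0 < f {v})
    (n : ℕ) (hn : 1 ≤ n)
    (a b : Fin n → V) (ha : Function.Injective a) (hb : Function.Injective b)
    (hab : ∀ i j : Fin n, a i = b j → i = j)
    (hbr : ∀ i : Fin n,
      marg f (b i) ((Finset.univ.image a) \ {a i}) ≤ marg f (a i) ((Finset.univ.image a) \ {a i})) :
    f (Finset.univ.image b) ≤ (1 + curvature f) * f (Finset.univ.image a) := by
  classical
  set A : Finset V := Finset.univ.image a with hA
  set B : Finset V := Finset.univ.image b with hB
  set κ : ℝ := curvature f with hκ
  set T : Finset (Fin n) := Finset.univ.filter (fun i => a i ≠ b i) with hT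
  -- basic marginal facts
  have marg_nonneg : ∀ (s : V) (S : Finset V), 0 ≤ marg f s S := by
    intro s S
    have := hmono S (insert s S) (Finset.subset_insert _ _)
    simp [marg]; linarith
  have marg_le_single : ∀ (s : V) (S : Finset V), marg f s S ≤ f {s} := by
    intro s S
    have := hsubmod ∅ S (Finset.empty_subset _) s
    simpa [marg, hnorm] using this
  -- curvature facts
  have hκ_le : ∀ v : V, (1 - κ) * f {v} ≤ marg f v (Finset.univ \ {v}) := by
    intro v
    have h1 : Finset.univ.inf' Finset.univ_nonempty
        (fun v => (f Finset.univ - f (Finset.univ \ {v})) / f {v})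
        ≤ (f Finset.univ - f (Finset.univ \ {v})) / f {v} :=
      Finset.inf'_le _ (Finset.mem_univ v)
    have h2 : (1 - κ) = Finset.univ.inf' Finset.univ_nonempty
        (fun v => (f Finset.univ - f (Finset.univ \ {v})) / f {v}) := by
      simp [hκ, curvature]
    have h3 : insert v (Finset.univ \ {v}) = Finset.univ := by
      rw [Finset.sdiff_singleton_eq_erase, Finset.insert_erase (Finset.mem_univ v)]
    have h4 : marg f v (Finset.univ \ {v}) = f Finset.univ - f (Finset.univ \ {v}) := by
      rw [marg, h3]
    rw [h4, h2]
    exact (le_div_iff₀ (hpos v)).1 h1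
  have hκ0 : 0 ≤ κ := by
    obtain ⟨v⟩ := ‹Nonempty V›
    have h1 : Finset.univ.inf' Finset.univ_nonempty
        (fun v => (f Finset.univ - f (Finset.univ \ {v})) / f {v})
        ≤ (f Finset.univ - f (Finset.univ \ {v})) / f {v} :=
      Finset.inf'_le _ (Finset.mem_univ v)
    have h3 : insert v (Finset.univ \ {v}) = Finset.univ := by
      rw [Finset.sdiff_singleton_eq_erase, Finset.insert_erase (Finset.mem_univ v)]
    have h4 : f Finset.univ - f (Finset.univ \ {v}) ≤ f {v} := by
      have := marg_le_single v (Finset.univ \ {v})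
      rw [marg, h3] at this; linarith
    have h5 : (f Finset.univ - f (Finset.univ \ {v})) / f {v} ≤ 1 :=
      (div_le_one (hpos v)).2 h4
    have h6 := le_trans h1 h5
    rw [hκ, curvature]
    linarith
  have hκ1 : κ ≤ 1 := by
    have h1 : (0:ℝ) ≤ Finset.univ.inf' Finset.univ_nonempty
        (fun v => (f Finset.univ - f (Finset.univ \ {v})) / f {v}) := by
      apply Finset.le_inf'
      intro v _
      have h3 : insert v (Finset.univ \ {v}) = Finset.univ := by
        rw [Finset.sdiff_singleton_eq_erase, Finset.insert_erase (Finset.mem_univ v)]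
      have h4 : 0 ≤ f Finset.univ - f (Finset.univ \ {v}) := by
        have := marg_nonneg v (Finset.univ \ {v})
        rw [marg, h3] at this; linarith
      exact div_nonneg h4 (le_of_lt (hpos v))
    rw [hκ, curvature]; linarith
  -- membership facts
  have haT_notB : ∀ i ∈ T, a i ∉ B := by
    intro i hi hmem
    rw [hB, Finset.mem_image] at hmem
    obtain ⟨j, _, hj⟩ := hmem
    have := hab i j hj.symm
    subst this
    rw [hT, Finset.mem_filter] at hi
    exact hi.2 hj.symm
  have hbnotT : ∀ i : Fin n, i ∉ T → b i ∈ A := by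
    intro i hi
    rw [hT, Finset.mem_filter] at hi
    push_neg at hi
    have : a i = b i := hi (Finset.mem_univ i)
    rw [hA, Finset.mem_image]
    exact ⟨i, Finset.mem_univ i, this⟩
  -- set equality : B ∪ a(T) = A ∪ b(T)
  have hset : B ∪ T.image a = A ∪ T.image b := by
    apply Finset.Subset.antisymm
    · apply Finset.union_subset
      · intro v hv
        rw [hB, Finset.mem_image] at hv
        obtain ⟨i, _, hi⟩ := hv
        by_cases hiT : i ∈ T
        · exact Finset.mem_union_right _ (Finset.mem_image.2 ⟨i, hiT, hi⟩)
        · apply Finset.mem_union_left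
          rw [hT, Finset.mem_filter] at hiT
          push_neg at hiT
          have : a i = b i := hiT (Finset.mem_univ i)
          rw [hA, Finset.mem_image]
          exact ⟨i, Finset.mem_univ i, this.trans hi⟩
      · intro v hv
        rw [Finset.mem_image] at hv
        obtain ⟨i, _, hi⟩ := hv
        exact Finset.mem_union_left _ (by rw [hA, Finset.mem_image]; exact ⟨i, Finset.mem_univ i, hi⟩)
    · apply Finset.union_subset
      · intro v hv
        rw [hA, Finset.mem_image] at hv
        obtain ⟨i, _, hi⟩ := hv
        by_cases hiT : i ∈ T
        · exact Finset.mem_union_right _ (Finset.mem_image.2 ⟨i, hiT, hi⟩)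
        · apply Finset.mem_union_left
          rw [hT, Finset.mem_filter] at hiT
          push_neg at hiT
          have : a i = b i := hiT (Finset.mem_univ i)
          rw [hB, Finset.mem_image]
          exact ⟨i, Finset.mem_univ i, this.symm.trans hi⟩
      · intro v hv
        rw [Finset.mem_image] at hv
        obtain ⟨i, _, hi⟩ := hv
        exact Finset.mem_union_left _ (by rw [hB, Finset.mem_image]; exact ⟨i, Finset.mem_univ i, hi⟩)
  -- marginal m i
  set m : Fin n → ℝ := fun i => marg f (a i) (A \ {a i}) with hm
  -- lower bound : f B + (1-κ) * Σ_{i∈T} f {a i} ≤ f (B ∪ a(T))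
  have inj_a : ∀ x ∈ T, ∀ y ∈ T, a x = a y → x = y := fun x _ y _ h => ha h
  have inj_b : ∀ x ∈ T, ∀ y ∈ T, b x = b y → x = y := fun x _ y _ h => hb h
  have hlow : f B + ∑ i ∈ T, marg f (a i) (Finset.univ \ {a i}) ≤ f (B ∪ T.image a) := by
    have := aux_L2 f hsubmod B (T.image a) (by
      intro v hv
      rw [Finset.mem_image] at hv
      obtain ⟨i, hiT, hi⟩ := hv
      rw [← hi]; exact haT_notB i hiT)
    rwa [Finset.sum_image inj_a] at this
  have hup : f (A ∪ T.image b) ≤ f A + ∑ i ∈ T, marg f (b i) A := by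
    have := aux_L1 f hsubmod (T.image b) A
    rwa [Finset.sum_image inj_b] at this
  have hB_le : f B ≤ f (B ∪ T.image a) := hmono _ _ Finset.subset_union_left
  -- best response bound
  have hbr' : ∀ i ∈ T, marg f (b i) A ≤ m i := by
    intro i _
    have h1 : marg f (b i) A ≤ marg f (b i) (A \ {a i}) :=
      hsubmod (A \ {a i}) A Finset.sdiff_subset (b i)
    exact h1.trans (hbr i)
  have hsum_br : ∑ i ∈ T, marg f (b i) A ≤ ∑ i ∈ T, m i :=
    Finset.sum_le_sum hbr'
  -- curvature per element bound
  have hcurv_sum : ∑ i ∈ T, (1 - κ) * m i ≤ ∑ i ∈ T, marg f (a i) (Finset.univ \ {a i}) := by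
    apply Finset.sum_le_sum
    intro i _
    calc (1 - κ) * m i ≤ (1 - κ) * f {a i} := by
          apply mul_le_mul_of_nonneg_left (marg_le_single _ _) (by linarith)
      _ ≤ marg f (a i) (Finset.univ \ {a i}) := hκ_le (a i)
  -- Σ m_i ≤ f A
  have hsumA : ∑ i ∈ T, m i ≤ f A := by
    have hTsub : T.image a ⊆ A := by
      intro v hv
      rw [Finset.mem_image] at hv
      obtain ⟨i, _, hi⟩ := hv
      rw [hA, Finset.mem_image]
      exact ⟨i, Finset.mem_univ i, hi⟩
    have h1 := aux_L3 f hsubmod A (T.image a) hTsub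
    rw [Finset.sum_image inj_a] at h1
    have h2 : 0 ≤ f (A \ T.image a) := by
      have := hmono ∅ (A \ T.image a) (Finset.empty_subset _)
      rw [hnorm] at this; exact this
    exact h1.trans (by linarith)
  -- combine
  have key : f B + ∑ i ∈ T, (1 - κ) * m i ≤ f A + ∑ i ∈ T, m i := by
    calc f B + ∑ i ∈ T, (1 - κ) * m i
        ≤ f B + ∑ i ∈ T, marg f (a i) (Finset.univ \ {a i}) := by linarith [hcurv_sum]
      _ ≤ f (B ∪ T.image a) := hlow
      _ = f (A ∪ T.image b) := by rw [hset]
      _ ≤ f A + ∑ i ∈ T, marg f (b i) A := hup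
      _ ≤ f A + ∑ i ∈ T, m i := by linarith [hsum_br]
  have hsum_eq : ∑ i ∈ T, m i - ∑ i ∈ T, (1 - κ) * m i = κ * ∑ i ∈ T, m i := by
    rw [← Finset.sum_sub_distrib, Finset.mul_sum]
    apply Finset.sum_congr rfl
    intro i _; ring
  have hmκ : κ * ∑ i ∈ T, m i ≤ κ * f A := mul_le_mul_of_nonneg_left hsumA hκ0
  have : f B ≤ f A + κ * ∑ i ∈ T, m i := by linarith [key, hsum_eq]
  calc f B ≤ f A + κ * f A := by linarith
    _ = (1 + κ) * f A := by ring
end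

section
/- Let V be a finite type and f : Finset V → ℝ normalized, non-decreasing, and submodular, with f({v}) > 0 for every v ∈ V, and curvature κ := κ_f satisfying κ < 1. Let n ≥ 1 and let a, b : Fin n → V be injective maps such that a i = b j implies i = j. Write A for the image of a and B for the image of b. If every agent's action is individually optimal against b, i.e. f({a i}) ≥ f({b i}) for every i, then f(A) ≥ ((1 − κ)/(1 + κ − κ²))·f(B). In particular, when b is an optimal joint action, the fully decentralized selection A (each agent coordinating with no other agent) achieves at least a (1−κ_f)/(1+κ_f−κ_f²) fraction of the optimal value. -/
/-- fully decentralized case of Theorem 1 (deterministic content):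
if every agent's action is individually optimal against `b`, then
`f(A) ≥ ((1 − κ)/(1 + κ − κ²)) · f(B)`. -/
theorem decentralized_bound {V : Type*} [Fintype V] [Nonempty V] [DecidableEq V]
    (f : Finset V → ℝ)
    (hnorm : f ∅ = 0)
    (hmono : ∀ A B : Finset V, A ⊆ B → f A ≤ f B)
    (hsubmod : ∀ A B : Finset V, A ⊆ B → ∀ s : V, marg f s B ≤ marg f s A)
    (hpos : ∀ v : V, 0 < f {v})
    (hκ : curvature f < 1)
    (n : ℕ) (hn : 1 ≤ n)
    (a b : Fin n → V) (ha : Function.Injective a) (hb : Function.Injective b)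
    (hab : ∀ i j : Fin n, a i = b j → i = j)
    (hopt : ∀ i : Fin n, f {b i} ≤ f {a i}) :
    f (Finset.univ.image a) ≥
      ((1 - curvature f) / (1 + curvature f - curvature f ^ 2)) * f (Finset.univ.image b) := by
  set κ := curvature f with hκdef
  have hinf : 1 - κ = Finset.univ.inf' Finset.univ_nonempty
      (fun v => (f Finset.univ - f (Finset.univ \ {v})) / f {v}) := by
    simp [hκdef, curvature]
  have hins : ∀ v : V, insert v (Finset.univ \ {v}) = Finset.univ := by
    intro v; ext x; by_cases hx : x = v <;> simp [hx]
  -- κ ≥ 0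
  have hκ0 : 0 ≤ κ := by
    obtain ⟨v⟩ := ‹Nonempty V›
    have h1 : 1 - κ ≤ (f Finset.univ - f (Finset.univ \ {v})) / f {v} := by
      rw [hinf]; exact Finset.inf'_le _ (Finset.mem_univ v)
    have h2 : f Finset.univ - f (Finset.univ \ {v}) ≤ f {v} := by
      have h := hsubmod ∅ (Finset.univ \ {v}) (Finset.empty_subset _) v
      simp [marg, hnorm, hins v] at h
      linarith
    have h3 : (f Finset.univ - f (Finset.univ \ {v})) / f {v} ≤ 1 :=
      (div_le_one (hpos v)).mpr h2
    linarith
  -- marginal lower bound via curvature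
  have hmargl : ∀ (v : V) (S : Finset V), v ∉ S → (1 - κ) * f {v} ≤ marg f v S := by
    intro v S hvS
    have h1 : 1 - κ ≤ (f Finset.univ - f (Finset.univ \ {v})) / f {v} := by
      rw [hinf]; exact Finset.inf'_le _ (Finset.mem_univ v)
    have h2 : (1 - κ) * f {v} ≤ f Finset.univ - f (Finset.univ \ {v}) :=
      (le_div_iff₀ (hpos v)).mp h1
    have hsub : S ⊆ Finset.univ \ {v} := by
      intro x hx
      simp only [Finset.mem_sdiff, Finset.mem_univ, Finset.mem_singleton, true_and]
      exact fun h => hvS (h ▸ hx)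
    have h3 := hsubmod S (Finset.univ \ {v}) hsub v
    have h4 : marg f v (Finset.univ \ {v}) = f Finset.univ - f (Finset.univ \ {v}) := by
      simp [marg, hins v]
    linarith
  -- lower bound: f S ≥ (1-κ) * Σ f {v}
  have hlow : ∀ S : Finset V, (1 - κ) * ∑ v ∈ S, f {v} ≤ f S := by
    intro S
    induction S using Finset.induction_on with
    | empty => simp [hnorm]
    | @insert v S hvS ih =>
      rw [Finset.sum_insert hvS, mul_add]
      have := hmargl v S hvS
      simp only [marg] at this
      linarith
  -- upper bound: f S ≤ Σ f {v}
  have hup : ∀ S : Finset V, f S ≤ ∑ v ∈ S, f {v} := by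
    intro S
    induction S using Finset.induction_on with
    | empty => simp [hnorm]
    | @insert v S hvS ih =>
      rw [Finset.sum_insert hvS]
      have h := hsubmod ∅ S (Finset.empty_subset _) v
      simp only [marg, hnorm, Finset.insert_empty] at h
      linarith
  -- compare sums
  have hsumA : ∑ v ∈ Finset.univ.image a, f {v} = ∑ i : Fin n, f {a i} :=
    Finset.sum_image (fun x _ y _ h => ha h)
  have hsumB : ∑ v ∈ Finset.univ.image b, f {v} = ∑ i : Fin n, f {b i} :=
    Finset.sum_image (fun x _ y _ h => hb h)
  have hBA : ∑ i : Fin n, f {b i} ≤ ∑ i : Fin n, f {a i} :=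
    Finset.sum_le_sum fun i _ => hopt i
  have hfB0 : 0 ≤ f (Finset.univ.image b) := by
    have := hmono ∅ (Finset.univ.image b) (Finset.empty_subset _)
    linarith
  have hmain : (1 - κ) * f (Finset.univ.image b) ≤ f (Finset.univ.image a) := by
    have h1 := hlow (Finset.univ.image a)
    have h2 := hup (Finset.univ.image b)
    rw [hsumA] at h1
    rw [hsumB] at h2
    nlinarith [hκ]
  have hd : (1 : ℝ) ≤ 1 + κ - κ ^ 2 := by nlinarith
  have hdiv : (1 - κ) / (1 + κ - κ ^ 2) ≤ 1 - κ := div_le_self (by linarith) hd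
  calc ((1 - κ) / (1 + κ - κ ^ 2)) * f (Finset.univ.image b)
      ≤ (1 - κ) * f (Finset.univ.image b) := mul_le_mul_of_nonneg_right hdiv hfB0
    _ ≤ f (Finset.univ.image a) := hmain
end

section
/- Let V be a finite type and f : Finset V → ℝ normalized, non-decreasing, and submodular, with f({v}) > 0 for every v ∈ V, and curvature κ := κ_f. Then for every v ∈ V and all subsets S, T ⊆ V with v ∉ T, it holds that f(v | T) ≥ (1 − κ) · f(v | S). -/
/-- curvature comparison of marginal gains: for every `v ∉ T` and any `S`,
`f(v | T) ≥ (1 − κ_f) · f(v | S)`. -/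
theorem curvature_marginal_bound {V : Type*} [Fintype V] [Nonempty V] [DecidableEq V]
    (f : Finset V → ℝ)
    (hnorm : f ∅ = 0)
    (hmono : ∀ A B : Finset V, A ⊆ B → f A ≤ f B)
    (hsubmod : ∀ A B : Finset V, A ⊆ B → ∀ s : V, marg f s B ≤ marg f s A)
    (hpos : ∀ v : V, 0 < f {v}) :
    ∀ (v : V) (S T : Finset V), v ∉ T →
      (1 - curvature f) * marg f v S ≤ marg f v T := by
  intro v S T hvT
  set r : ℝ := (f Finset.univ - f (Finset.univ \ {v})) / f {v} with hr
  have hκ : 1 - curvature f ≤ r := by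
    simp only [curvature, sub_sub_cancel]
    exact Finset.inf'_le _ (Finset.mem_univ v)
  have hrnn : 0 ≤ r :=
    div_nonneg (sub_nonneg.2 (hmono _ _ (Finset.sdiff_subset))) (hpos v).le
  have hmargS_nn : 0 ≤ marg f v S :=
    sub_nonneg.2 (hmono _ _ (Finset.subset_insert _ _))
  have hmargS : marg f v S ≤ f {v} := by
    have := hsubmod ∅ S (Finset.empty_subset S) v
    simpa [marg, hnorm] using this
  have hTsub : T ⊆ Finset.univ \ {v} := by
    intro x hx
    simp only [Finset.mem_sdiff, Finset.mem_univ, Finset.mem_singleton, true_and]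
    rintro rfl; exact hvT hx
  have hmargT : f Finset.univ - f (Finset.univ \ {v}) ≤ marg f v T := by
    have h := hsubmod T (Finset.univ \ {v}) hTsub v
    have hins : insert v (Finset.univ \ {v}) = Finset.univ := by
      ext x; by_cases hx : x = v <;> simp [hx]
    simpa [marg, hins] using h
  calc (1 - curvature f) * marg f v S ≤ r * marg f v S :=
        mul_le_mul_of_nonneg_right hκ hmargS_nn
    _ ≤ r * f {v} := mul_le_mul_of_nonneg_left hmargS hrnn
    _ = f Finset.univ - f (Finset.univ \ {v}) := by
        rw [hr, div_mul_cancel₀ _ (hpos v).ne']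
    _ ≤ marg f v T := hmargT
end

section
/- Let V be a finite type and f : Finset V → ℝ normalized, non-decreasing, and submodular, with f({v}) > 0 for every v ∈ V, and curvature κ := κ_f. Then for every subset A ⊆ V, f(A) ≥ (1 − κ) · Σ_{a ∈ A} f({a}). -/
/-- curvature-based lower bound of a set value by singleton values:
`f(A) ≥ (1 − κ_f) · Σ_{a ∈ A} f({a})`. -/
theorem curvature_singleton_bound {V : Type*} [Fintype V] [Nonempty V] [DecidableEq V]
    (f : Finset V → ℝ)
    (hnorm : f ∅ = 0)
    (hmono : ∀ A B : Finset V, A ⊆ B → f A ≤ f B)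
    (hsubmod : ∀ A B : Finset V, A ⊆ B → ∀ s : V, marg f s B ≤ marg f s A)
    (hpos : ∀ v : V, 0 < f {v}) :
    ∀ A : Finset V, (1 - curvature f) * ∑ a ∈ A, f {a} ≤ f A := by
  intro A
  induction A using Finset.induction_on with
  | empty => simp [hnorm]
  | @insert a A ha ih =>
    rw [Finset.sum_insert ha, mul_add]
    have key : (1 - curvature f) * f {a} ≤ marg f a A := by
      have h1 : (1 - curvature f) ≤ (f Finset.univ - f (Finset.univ \ {a})) / f {a} := by
        have : (1 : ℝ) - curvature f = Finset.univ.inf' Finset.univ_nonempty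
            (fun v => (f Finset.univ - f (Finset.univ \ {v})) / f {v}) := by
          unfold curvature; ring
        rw [this]
        exact Finset.inf'_le _ (Finset.mem_univ a)
      have h2 : (1 - curvature f) * f {a} ≤ f Finset.univ - f (Finset.univ \ {a}) := by
        have := mul_le_mul_of_nonneg_right h1 (hpos a).le
        rwa [div_mul_cancel₀ _ (hpos a).ne'] at this
      have h3 : f Finset.univ - f (Finset.univ \ {a}) = marg f a (Finset.univ \ {a}) := by
        unfold marg
        congr 1
        rw [Finset.insert_eq, Finset.union_sdiff_of_subset (by simp)]
      have h4 : marg f a (Finset.univ \ {a}) ≤ marg f a A := by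
        apply hsubmod
        intro x hx
        simp only [Finset.mem_sdiff, Finset.mem_univ, Finset.mem_singleton, true_and]
        rintro rfl; exact ha hx
      linarith
    have : f (insert a A) = f A + marg f a A := by unfold marg; ring
    linarith
end
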